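/- Let B : ℝ^t → T^{≥1}(ℝ^n) be linear and let X, Y be paths in ℝ^n with X₀ = 0 and Y₀ = 0. Then Λ_B^*(X ⊔ Y) = (Λ_B^* X) ⊔ (Λ_{δ_X B}^* Y) as paths in ℝ^t, where δ_X B is the linear map with δ_X B(i) := B(i) + Σ' ⟨σ(X), u⟩·v, the sum Σ' running over the deconcatenation splittings B(i) = Σ u·v into nonempty prefix u and nonempty suffix v (i.e. the reduced deconcatenation coproduct of B(i) paired with σ(X) in the first slot). -/

import Mathlib

/-! Chen's identity: on `[X.T, X.T + Y.T]`, each iterated integral of `X ⊔ Y` over a word `w`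
is `Σ_{w = uv} ⟨σ(X), u⟩ ⟨σ(Y)_{s - X.T}, v⟩`, proved by splitting the outermost integral at
`X.T`. Pairing with `B j`, the terms with `u` or `v` empty give `Λ_B^* X` at `X.T` and `Λ_B^* Y`,
while the remaining terms are exactly the correction `δ_X B - B`; subtracting the value at time
`0` only removes the constant term. -/

open scoped BigOperators TensorProduct

namespace PathVarieties

/-- Words over an alphabet `α`; the letters `{1,…,d}` of `ℝ^d` correspond to `α = Fin d`. -/
abbrev Word (α : Type*) := List α

/-- The tensor algebra `T(ℝ^d)`, identified with the free real vector space on words. -/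
abbrev TA (α : Type*) := Word α →₀ ℝ

/-- The list of all (riffle) shuffles of two words. -/
def shuffles {α : Type*} : Word α → Word α → List (Word α)
  | [], v => [v]
  | a :: u, [] => [a :: u]
  | a :: u, b :: v =>
      ((shuffles u (b :: v)).map (a :: ·)) ++ ((shuffles (a :: u) v).map (b :: ·))
termination_by u v => u.length + v.length
decreasing_by all_goals (simp only [List.length_cons]; omega)

/-- Shuffle product of two words, as an element of `T(ℝ^d)`. -/
noncomputable def shw {α : Type*} (u v : Word α) : TA α :=
  ((shuffles u v).map fun w => Finsupp.single w (1 : ℝ)).sum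

/-- The shuffle product `⧢` on `T(ℝ^d)`, the bilinear extension of the shuffle of words. -/
noncomputable def sh {α : Type*} (x y : TA α) : TA α :=
  x.sum fun u cu => y.sum fun v cv => (cu * cv) • shw u v

/-- Right halfshuffle `u ≻ v` of words (`v` nonempty): shuffle `u` with `v` minus its
last letter, then append the last letter of `v`.  (This is the unique bilinear operation
with `w ≻ a = wa` and `w ≻ (va) = (w≻v + v≻w)a`.) -/
noncomputable def rshw {α : Type*} (u v : Word α) : TA α :=
  ((shuffles u v.dropLast).map fun w =>
    Finsupp.single (w ++ v.drop (v.length - 1)) (1 : ℝ)).sum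

/-- Right halfshuffle `≻` on `T^{≥1}(ℝ^d)`, extended bilinearly. -/
noncomputable def rsh {α : Type*} (x y : TA α) : TA α :=
  x.sum fun u cu => y.sum fun v cv => (cu * cv) • rshw u v

/-- Left halfshuffle `u ≺ v` of words (`u` nonempty): the first letter of `u` followed by
the shuffle of the rest of `u` with `v`.  (This is the unique bilinear operation with
`a ≺ w = aw` and `(av) ≺ w = a(w≺v + v≺w)`.) -/
noncomputable def lshw {α : Type*} (u v : Word α) : TA α :=
  ((shuffles u.tail v).map fun w => Finsupp.single (u.take 1 ++ w) (1 : ℝ)).sum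

/-- Left halfshuffle `≺` on `T^{≥1}(ℝ^d)`, extended bilinearly. -/
noncomputable def lsh {α : Type*} (x y : TA α) : TA α :=
  x.sum fun u cu => y.sum fun v cv => (cu * cv) • lshw u v

/-- The antipode `𝒜`, with `𝒜(i₁⋯iₙ) = (−1)ⁿ iₙ⋯i₁`. -/
noncomputable def antipode {α : Type*} (x : TA α) : TA α :=
  x.sum fun w c => Finsupp.single w.reverse (((-1 : ℝ) ^ w.length) * c)

/-- Helper for `Λ_B`: value on a reversed word. -/
noncomputable def lamRev {α β : Type*} (B : α → TA β) : Word α → TA β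
  | [] => Finsupp.single [] 1
  | [i] => B i
  | i :: w => rsh (lamRev B w) (B i)

/-- `Λ_B` on a word: `Λ_B e = e`, `Λ_B i = B i`, `Λ_B (w·i) = (Λ_B w) ≻ (Λ_B i)`. -/
noncomputable def lamW {α β : Type*} (B : α → TA β) (w : Word α) : TA β :=
  lamRev B w.reverse

/-- The linear map `Λ_B : T(ℝ^t) → T(ℝ^d)` induced by `B` on letters. -/
noncomputable def Lam {α β : Type*} (B : α → TA β) (x : TA α) : TA β :=
  x.sum fun w c => c • lamW B w

/-- `splitEmb e j n w = Σ_{w = u₁⋯uₙ} e_j(u₁) ⧢ e_{j+1}(u₂) ⧢ ⋯ ⧢ e_{j+n−1}(uₙ)`,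
the sum over all splittings of `w` into `n` consecutive (possibly empty) factors,
each factor relabelled letterwise by `e`. -/
noncomputable def splitEmb {α β : Type*} (e : ℕ → α → β) : ℕ → ℕ → Word α → TA β
  | _, 0, w => if w.isEmpty then Finsupp.single ([] : Word β) (1 : ℝ) else 0
  | j, k + 1, w => ∑ m ∈ Finset.range (w.length + 1),
      sh (Finsupp.single ((w.take m).map (e j)) (1 : ℝ)) (splitEmb e (j + 1) k (w.drop m))

/-- `Σ_{x=uv} f(u)·v`: deconcatenate, evaluate the functional `f` on prefixes. -/
noncomputable def leftAct {α : Type*} (f : Word α → ℝ) (x : TA α) : TA α :=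
  x.sum fun w c => c • ∑ k ∈ Finset.range (w.length + 1),
    f (w.take k) • Finsupp.single (w.drop k) (1 : ℝ)

/-- `Σ_{x=uv} u·f(v)`: deconcatenate, evaluate the functional `f` on suffixes. -/
noncomputable def rightAct {α : Type*} (f : Word α → ℝ) (x : TA α) : TA α :=
  x.sum fun w c => c • ∑ k ∈ Finset.range (w.length + 1),
    f (w.drop k) • Finsupp.single (w.take k) (1 : ℝ)

/-- A raw path: a time horizon `T` together with a map `ℝ → ℝ^α`
(only the restriction to `[0,T]` is relevant). -/
structure RawPath (α : Type*) where
  T : ℝ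
  toFun : ℝ → α → ℝ

/-- A path: positive time horizon, continuous on `[0,T]` and piecewise continuously
differentiable there (witnessed by a partition `0 = τ₀ < τ₁ < ⋯ < τₙ = T`). -/
def IsPath {α : Type*} (X : RawPath α) : Prop :=
  0 < X.T ∧ (∀ i, ContinuousOn (fun t => X.toFun t i) (Set.Icc 0 X.T)) ∧
    ∃ (n : ℕ) (τ : Fin (n + 1) → ℝ), StrictMono τ ∧ τ 0 = 0 ∧ τ (Fin.last n) = X.T ∧
      ∀ (k : Fin n) (i : α), ContDiffOn ℝ 1 (fun t => X.toFun t i)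
        (Set.Icc (τ k.castSucc) (τ k.succ))

/-- Iterated integrals, by recursion on the reversed word:
`sigRev X (i :: w) t = ∫₀ᵗ ⟨σ(X)ₛ, w.reverse⟩ dX⁽ⁱ⁾(s)`. -/
noncomputable def sigRev {α : Type*} (X : ℝ → α → ℝ) : Word α → ℝ → ℝ
  | [], _ => 1
  | i :: w, t => ∫ s in (0 : ℝ)..t, sigRev X w s * deriv (fun u => X u i) s

/-- `⟨σ(X)_t, w⟩`, the iterated-integrals signature of `X` stopped at time `t`. -/
noncomputable def sigUpTo {α : Type*} (X : RawPath α) (t : ℝ) (w : Word α) : ℝ :=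
  sigRev X.toFun w.reverse t

/-- `⟨σ(X), w⟩`, the iterated-integrals signature of the path `X` at a word `w`. -/
noncomputable def sig {α : Type*} (X : RawPath α) (w : Word α) : ℝ :=
  sigUpTo X X.T w

/-- Pairing of a word-indexed functional with an element of `T(ℝ^d)`. -/
noncomputable def pairF {α : Type*} (f : Word α → ℝ) (x : TA α) : ℝ :=
  x.sum fun w c => c * f w

/-- `⟨σ(X), x⟩` for a tensor `x ∈ T(ℝ^d)` (linear in `x`). -/
noncomputable def pair {α : Type*} (X : RawPath α) (x : TA α) : ℝ :=
  Finsupp.linearCombination ℝ (sig X) x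

/-- The path variety `𝒱(W)` of all paths whose signature kills every element of `W`. -/
def V {α : Type*} (W : Set (TA α)) : Set (RawPath α) :=
  {X | IsPath X ∧ ∀ x ∈ W, pair X x = 0}

/-- `ℐ(M)`, the space of tensors killed by the signature of every path in `M`. -/
noncomputable def Idl {α : Type*} (M : Set (RawPath α)) : Submodule ℝ (TA α) :=
  ⨅ X ∈ M, LinearMap.ker (Finsupp.linearCombination ℝ (sig X))

/-- Concatenation `X ⊔ Y` of paths. -/
noncomputable def concat {α : Type*} (X Y : RawPath α) : RawPath α where
  T := X.T + Y.T
  toFun := fun t i =>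
    if t ≤ X.T then X.toFun t i else Y.toFun (t - X.T) i + X.toFun X.T i - Y.toFun 0 i

/-- Time reversal `⟵X`. -/
def timeRev {α : Type*} (X : RawPath α) : RawPath α :=
  ⟨X.T, fun t i => X.toFun (X.T - t) i⟩

/-- `concatIter X n = X^{⊔(n+1)}`. -/
noncomputable def concatIter {α : Type*} (X : RawPath α) : ℕ → RawPath α
  | 0 => X
  | n + 1 => concat (concatIter X n) X

/-- `X^{⊔n}`, the `n`-fold concatenation of `X` with itself (intended for `n ≥ 1`). -/
noncomputable def concatPow {α : Type*} (X : RawPath α) (n : ℕ) : RawPath α :=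
  concatIter X (n - 1)

/-- `concatFold f k = f 0 ⊔ f 1 ⊔ ⋯ ⊔ f k`. -/
noncomputable def concatFold {α : Type*} (f : ℕ → RawPath α) : ℕ → RawPath α
  | 0 => f 0
  | k + 1 => concat (concatFold f k) (f (k + 1))

/-- The deconcatenation coproduct `Δ : T(ℝ^d) → T(ℝ^d) ⊗ T(ℝ^d)`,
`Δw = Σ_{w=uv} u ⊗ v`. -/
noncomputable def deconc {α : Type*} (x : TA α) : TensorProduct ℝ (TA α) (TA α) :=
  x.sum fun w c => c • ∑ k ∈ Finset.range (w.length + 1),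
    (Finsupp.single (w.take k) (1 : ℝ)) ⊗ₜ[ℝ] (Finsupp.single (w.drop k) (1 : ℝ))

open MeasureTheory Set

theorem intervalIntegrable_deriv_of_contDiffOn {f : ℝ → ℝ} {a b : ℝ} (hab : a ≤ b)
    (hf : ContDiffOn ℝ 1 f (Icc a b)) : IntervalIntegrable (deriv f) volume a b := by
  rcases hab.eq_or_lt with rfl | hab
  · exact .refl
  refine ((hf.continuousOn_derivWithin (uniqueDiffOn_Icc hab) le_rfl).intervalIntegrable_of_Icc
    hab.le).congr_uIoo fun u hu => ?_
  rw [uIoo_of_le hab.le] at hu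
  exact derivWithin_of_mem_nhds (Icc_mem_nhds hu.1 hu.2)

theorem sum_range_succ_eq_add_sum_Ioo_add {M : Type*} [AddCommMonoid M] (F : ℕ → M)
    {m : ℕ} (hm : 0 < m) :
    ∑ k ∈ Finset.range (m + 1), F k = F 0 + ∑ k ∈ Finset.Ioo 0 m, F k + F m := by
  rw [Finset.sum_range_succ, Finset.range_eq_Ico, Finset.sum_eq_sum_Ico_succ_bot hm,
    Finset.Ico_add_one_left_eq_Ioo]

variable {α : Type*}

def IntegrableDeriv (X : RawPath α) : Prop :=
  ∀ i, IntervalIntegrable (deriv fun t => X.toFun t i) volume 0 X.T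

theorem IsPath.integrableDeriv {X : RawPath α} (hX : IsPath X) : IntegrableDeriv X := by
  obtain ⟨-, -, n, τ, hτ, hτ0, hτn, hpieces⟩ := hX
  intro i
  have := IntervalIntegrable.trans_iterate (f := deriv fun t => X.toFun t i) (μ := volume)
    (a := fun k => τ (Fin.ofNat (n + 1) k)) (n := n) fun k hk => ?_
  · have hlast : Fin.ofNat (n + 1) n = Fin.last n := by ext; simp
    simpa [hτ0, hτn, hlast] using this
  have hcast : Fin.ofNat (n + 1) k = (⟨k, hk⟩ : Fin n).castSucc := by
    ext; simp [Nat.mod_eq_of_lt (hk.trans n.lt_succ_self)]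
  have hcast' : Fin.ofNat (n + 1) (k + 1) = (⟨k, hk⟩ : Fin n).succ := by
    ext; simp [Nat.mod_eq_of_lt (Nat.succ_lt_succ hk)]
  simp only [hcast, hcast']
  exact intervalIntegrable_deriv_of_contDiffOn (hτ Fin.castSucc_lt_succ).le
    (hpieces _ i)

@[simp]
theorem concat_T (X Y : RawPath α) : (concat X Y).T = X.T + Y.T := rfl

theorem concat_toFun_of_le (X Y : RawPath α) {s : ℝ} (hs : s ≤ X.T) (i : α) :
    (concat X Y).toFun s i = X.toFun s i :=
  if_pos hs

theorem concat_toFun_of_gt (X Y : RawPath α) {s : ℝ} (hs : X.T < s) (i : α) :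
    (concat X Y).toFun s i = Y.toFun (s - X.T) i + X.toFun X.T i - Y.toFun 0 i :=
  if_neg hs.not_ge

theorem deriv_concat_of_lt (X Y : RawPath α) (i : α) {u : ℝ} (hu : u < X.T) :
    deriv (fun t => (concat X Y).toFun t i) u = deriv (fun t => X.toFun t i) u := by
  refine Filter.EventuallyEq.deriv_eq ?_
  filter_upwards [Iio_mem_nhds hu] with v hv
  exact concat_toFun_of_le X Y (le_of_lt hv) i

theorem deriv_concat_of_gt (X Y : RawPath α) (i : α) {u : ℝ} (hu : X.T < u) :
    deriv (fun t => (concat X Y).toFun t i) u = deriv (fun t => Y.toFun t i) (u - X.T) := by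
  have h : (fun t => (concat X Y).toFun t i) =ᶠ[nhds u]
      fun t => Y.toFun (t - X.T) i + X.toFun X.T i - Y.toFun 0 i := by
    filter_upwards [Ioi_mem_nhds hu] with v hv
    exact concat_toFun_of_gt X Y hv i
  rw [h.deriv_eq, deriv_sub_const, deriv_add_const,
    deriv_comp_sub_const (f := fun s => Y.toFun s i)]

theorem integrableDeriv_concat {X Y : RawPath α} (hX : IntegrableDeriv X)
    (hY : IntegrableDeriv Y) (hXT : 0 ≤ X.T) (hYT : 0 ≤ Y.T) : IntegrableDeriv (concat X Y) := by
  intro i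
  have hleft : IntervalIntegrable (deriv fun t => (concat X Y).toFun t i) volume 0 X.T :=
    (hX i).congr_uIoo fun u hu => by
      rw [uIoo_of_le hXT] at hu
      exact (deriv_concat_of_lt X Y i hu.2).symm
  have hright : IntervalIntegrable (deriv fun t => (concat X Y).toFun t i) volume X.T
      (X.T + Y.T) := by
    have hshift := (hY i).comp_sub_right X.T
    rw [zero_add, add_comm Y.T] at hshift
    refine hshift.congr_uIoo fun u hu => ?_
    rw [uIoo_of_le (by linarith)] at hu
    exact (deriv_concat_of_gt X Y i hu.1).symm
  exact hleft.trans hright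

theorem continuousOn_sigRev {X : RawPath α} (hX : IntegrableDeriv X) (w : Word α) :
    ContinuousOn (sigRev X.toFun w) (uIcc 0 X.T) := by
  induction w with
  | nil => exact continuousOn_const
  | cons a w ih =>
    exact intervalIntegral.continuousOn_primitive_interval' ((hX a).continuousOn_mul ih)
      left_mem_uIcc

theorem intervalIntegrable_sigRev_mul_deriv {X : RawPath α} (hX : IntegrableDeriv X)
    (w : Word α) (i : α) :
    IntervalIntegrable (fun u => sigRev X.toFun w u * deriv (fun t => X.toFun t i) u)
      volume 0 X.T :=
  (hX i).continuousOn_mul (continuousOn_sigRev hX w)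

theorem sigRev_concat_of_le (X Y : RawPath α) (w : Word α) {s : ℝ} (hs : s ∈ Icc 0 X.T) :
    sigRev (concat X Y).toFun w s = sigRev X.toFun w s := by
  induction w generalizing s with
  | nil => rfl
  | cons a w ih =>
    refine intervalIntegral.integral_congr_Ioo_of_le hs.1 fun u hu => ?_
    have hu' : u < X.T := hu.2.trans_le hs.2
    simp only [ih ⟨hu.1.le, hu'.le⟩, deriv_concat_of_lt X Y a hu']

theorem sigRev_concat_of_ge {X Y : RawPath α} (hX : IntegrableDeriv X) (hY : IntegrableDeriv Y)
    (hXT : 0 ≤ X.T) (w : Word α) {s : ℝ} (hs : s ∈ Icc X.T (X.T + Y.T)) :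
    sigRev (concat X Y).toFun w s = ∑ k ∈ Finset.range (w.length + 1),
      sigRev Y.toFun (w.take k) (s - X.T) * sigRev X.toFun (w.drop k) X.T := by
  induction w generalizing s with
  | nil => simp [sigRev]
  | cons a w ih =>
    obtain ⟨hs₁, hs₂⟩ := hs
    have hYT : 0 ≤ Y.T := by linarith
    have hint := intervalIntegrable_sigRev_mul_deriv (integrableDeriv_concat hX hY hXT hYT) w a
    rw [concat_T] at hint
    have hsplit := intervalIntegral.integral_add_adjacent_intervals
      (hint.mono_set (uIcc_subset_uIcc left_mem_uIcc (mem_uIcc_of_le hXT (by linarith))))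
      (hint.mono_set (uIcc_subset_uIcc (mem_uIcc_of_le hXT (by linarith))
        (mem_uIcc_of_le (by linarith) hs₂)))
    have hright : (∫ u in X.T..s,
        sigRev (concat X Y).toFun w u * deriv (fun t => (concat X Y).toFun t a) u) =
        ∑ k ∈ Finset.range (w.length + 1),
          sigRev Y.toFun (a :: w.take k) (s - X.T) * sigRev X.toFun (w.drop k) X.T := by
      calc _ = ∫ u in X.T..s, ∑ k ∈ Finset.range (w.length + 1),
              sigRev Y.toFun (w.take k) (u - X.T) * deriv (fun t => Y.toFun t a) (u - X.T) *
                sigRev X.toFun (w.drop k) X.T := by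
            refine intervalIntegral.integral_congr_Ioo_of_le hs₁ fun u hu => ?_
            rw [ih ⟨hu.1.le, hu.2.le.trans hs₂⟩, deriv_concat_of_gt X Y a hu.1, Finset.sum_mul]
            exact Finset.sum_congr rfl fun k _ => by ring
        _ = ∫ v in 0..s - X.T, ∑ k ∈ Finset.range (w.length + 1),
              sigRev Y.toFun (w.take k) v * deriv (fun t => Y.toFun t a) v *
                sigRev X.toFun (w.drop k) X.T := by
            rw [intervalIntegral.integral_comp_sub_right (fun v =>
              ∑ k ∈ Finset.range (w.length + 1), sigRev Y.toFun (w.take k) v *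
                deriv (fun t => Y.toFun t a) v * sigRev X.toFun (w.drop k) X.T), sub_self]
        _ = _ := by
            rw [intervalIntegral.integral_finsetSum fun k _ =>
              ((intervalIntegrable_sigRev_mul_deriv hY _ a).mul_const _).mono_set
                (uIcc_subset_uIcc left_mem_uIcc (mem_uIcc_of_le (by linarith) (by linarith)))]
            simp only [intervalIntegral.integral_mul_const, sigRev]
    have hleft := sigRev_concat_of_le X Y (a :: w) ⟨hXT, le_rfl⟩
    rw [sigRev] at hleft ⊢
    rw [← hsplit, hleft, hright, List.length_cons, Finset.sum_range_succ' _ (w.length + 1)]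
    simp [sigRev, add_comm]

@[simp]
theorem sigUpTo_nil (X : RawPath α) (s : ℝ) : sigUpTo X s [] = 1 := rfl

@[simp]
theorem sig_nil (X : RawPath α) : sig X [] = 1 := rfl

theorem sigUpTo_zero_of_ne_nil (X : RawPath α) {w : Word α} (hw : w ≠ []) :
    sigUpTo X 0 w = 0 := by
  obtain ⟨v, a, rfl⟩ := List.eq_nil_or_concat w |>.resolve_left hw
  simp [sigUpTo, sigRev]

theorem sigUpTo_concat_of_le (X Y : RawPath α) {s : ℝ} (hs : s ∈ Icc 0 X.T) :
    sigUpTo (concat X Y) s = sigUpTo X s :=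
  funext fun w => sigRev_concat_of_le X Y w.reverse hs

theorem sigUpTo_concat_of_ge {X Y : RawPath α} (hX : IntegrableDeriv X)
    (hY : IntegrableDeriv Y) (hXT : 0 ≤ X.T) {s : ℝ} (hs : s ∈ Icc X.T (X.T + Y.T))
    (w : Word α) :
    sigUpTo (concat X Y) s w = ∑ k ∈ Finset.range (w.length + 1),
      sig X (w.take k) * sigUpTo Y (s - X.T) (w.drop k) := by
  rw [sigUpTo, sigRev_concat_of_ge hX hY hXT _ hs, List.length_reverse,
    ← Finset.sum_range_reflect]
  refine Finset.sum_congr rfl fun k hk => ?_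
  rw [Finset.mem_range] at hk
  rw [show w.length + 1 - 1 - k = w.length - k by omega, ← List.reverse_drop, ← List.reverse_take,
    mul_comm]
  rfl

theorem sigUpTo_concat_of_ge_reduced {X Y : RawPath α} (hX : IntegrableDeriv X)
    (hY : IntegrableDeriv Y) (hXT : 0 ≤ X.T) {s : ℝ} (hs : s ∈ Icc X.T (X.T + Y.T))
    (w : Word α) :
    sigUpTo (concat X Y) s w =
      (sigUpTo Y (s - X.T) w + ∑ k ∈ Finset.Ioo 0 w.length,
          sig X (w.take k) * sigUpTo Y (s - X.T) (w.drop k)) + sig X w -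
        (sigUpTo Y 0 w + ∑ k ∈ Finset.Ioo 0 w.length,
          sig X (w.take k) * sigUpTo Y 0 (w.drop k)) := by
  rw [sigUpTo_concat_of_ge hX hY hXT hs]
  rcases eq_or_ne w [] with rfl | hw
  · simp
  have hzero : ∑ k ∈ Finset.Ioo 0 w.length, sig X (w.take k) * sigUpTo Y 0 (w.drop k) = 0 :=
    Finset.sum_eq_zero fun k hk => by
      rw [sigUpTo_zero_of_ne_nil Y (by simpa using (Finset.mem_Ioo.mp hk).2), mul_zero]
  rw [sum_range_succ_eq_add_sum_Ioo_add _ (List.length_pos_iff.mpr hw), hzero,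
    sigUpTo_zero_of_ne_nil Y hw]
  simp only [List.take_zero, List.drop_zero, List.take_length, List.drop_length, sig_nil,
    sigUpTo_nil]
  ring

theorem pairF_eq_linearCombination (f : Word α → ℝ) :
    pairF f = Finsupp.linearCombination ℝ f := rfl

theorem pairF_add (f : Word α → ℝ) (x y : TA α) :
    pairF f (x + y) = pairF f x + pairF f y := by
  simp [pairF_eq_linearCombination]

noncomputable def reducedLeftAct (f : Word α → ℝ) (x : TA α) : TA α :=
  x.sum fun w c => c • ∑ k ∈ Finset.Ioo 0 w.length, f (w.take k) • Finsupp.single (w.drop k) 1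

theorem pairF_reducedLeftAct (f g : Word α → ℝ) (x : TA α) :
    pairF g (reducedLeftAct f x) =
      x.sum fun w c => c * ∑ k ∈ Finset.Ioo 0 w.length, f (w.take k) * g (w.drop k) := by
  simp [pairF_eq_linearCombination, reducedLeftAct, map_finsuppSum, Finsupp.linearCombination_apply]

theorem pairF_sigUpTo_concat_of_ge {X Y : RawPath α} (hX : IntegrableDeriv X)
    (hY : IntegrableDeriv Y) (hXT : 0 ≤ X.T) {s : ℝ} (hs : s ∈ Icc X.T (X.T + Y.T))
    (x : TA α) :
    pairF (sigUpTo (concat X Y) s) x =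
      pairF (sigUpTo Y (s - X.T)) (x + reducedLeftAct (sig X) x) + pairF (sig X) x -
        pairF (sigUpTo Y 0) (x + reducedLeftAct (sig X) x) := by
  simp only [pairF_add, pairF_reducedLeftAct]
  simp only [pairF, ← Finsupp.sum_add, ← Finsupp.sum_sub]
  refine Finsupp.sum_congr fun w _ => ?_
  rw [sigUpTo_concat_of_ge_reduced hX hY hXT hs]
  ring

theorem statement13_general {t n : ℕ} (B : Fin t → TA (Fin n))
    (X Y : RawPath (Fin n)) (hX : IsPath X) (hY : IsPath Y) :
    (⟨(concat X Y).T, fun s j => pairF (sigUpTo (concat X Y) s) (B j)⟩ :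
        RawPath (Fin t)).T =
      (concat
        (⟨X.T, fun s j => pairF (sigUpTo X s) (B j)⟩ : RawPath (Fin t))
        (⟨Y.T, fun s j => pairF (sigUpTo Y s)
          (B j + (B j).sum fun w c => c • ∑ k ∈ Finset.Ioo 0 w.length,
            sig X (w.take k) • Finsupp.single (w.drop k) (1 : ℝ))⟩ :
          RawPath (Fin t))).T ∧
    ∀ s ∈ Set.Icc (0 : ℝ) (X.T + Y.T), ∀ j : Fin t,
      (⟨(concat X Y).T, fun u j' => pairF (sigUpTo (concat X Y) u) (B j')⟩ :
          RawPath (Fin t)).toFun s j =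
        (concat
          (⟨X.T, fun u j' => pairF (sigUpTo X u) (B j')⟩ : RawPath (Fin t))
          (⟨Y.T, fun u j' => pairF (sigUpTo Y u)
            (B j' + (B j').sum fun w c => c • ∑ k ∈ Finset.Ioo 0 w.length,
              sig X (w.take k) • Finsupp.single (w.drop k) (1 : ℝ))⟩ :
            RawPath (Fin t))).toFun s j := by
  refine ⟨rfl, fun s hs j => ?_⟩
  rcases le_or_gt s X.T with hsX | hsX
  · refine Eq.trans ?_ (concat_toFun_of_le _ _ (by exact hsX) j).symm
    exact congrArg (pairF · (B j)) (sigUpTo_concat_of_le X Y ⟨hs.1, hsX⟩)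
  · refine Eq.trans ?_ (concat_toFun_of_gt _ _ (by exact hsX) j).symm
    exact pairF_sigUpTo_concat_of_ge hX.integrableDeriv hY.integrableDeriv hX.1.le
      ⟨hsX.le, hs.2⟩ (B j)

/-- `Λ_B^*(X ⊔ Y) = (Λ_B^* X) ⊔ (Λ_{δ_X B}^* Y)` as paths in `ℝ^t`,
where `δ_X B(i) = B(i) + Σ' ⟨σ(X), u⟩·v` summed over the splittings of `B(i)` into
nonempty prefix `u` and nonempty suffix `v`. -/
theorem statement13 {t n : ℕ} (B : Fin t → TA (Fin n)) (hB : ∀ j, (B j) [] = 0)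
    (X Y : RawPath (Fin n)) (hX : IsPath X) (hY : IsPath Y)
    (hX0 : ∀ i, X.toFun 0 i = 0) (hY0 : ∀ i, Y.toFun 0 i = 0) :
    (⟨(concat X Y).T, fun s j => pairF (sigUpTo (concat X Y) s) (B j)⟩ :
        RawPath (Fin t)).T =
      (concat
        (⟨X.T, fun s j => pairF (sigUpTo X s) (B j)⟩ : RawPath (Fin t))
        (⟨Y.T, fun s j => pairF (sigUpTo Y s)
          (B j + (B j).sum fun w c => c • ∑ k ∈ Finset.Ioo 0 w.length,
            sig X (w.take k) • Finsupp.single (w.drop k) (1 : ℝ))⟩ :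
          RawPath (Fin t))).T ∧
    ∀ s ∈ Set.Icc (0 : ℝ) (X.T + Y.T), ∀ j : Fin t,
      (⟨(concat X Y).T, fun u j' => pairF (sigUpTo (concat X Y) u) (B j')⟩ :
          RawPath (Fin t)).toFun s j =
        (concat
          (⟨X.T, fun u j' => pairF (sigUpTo X u) (B j')⟩ : RawPath (Fin t))
          (⟨Y.T, fun u j' => pairF (sigUpTo Y u)
            (B j' + (B j').sum fun w c => c • ∑ k ∈ Finset.Ioo 0 w.length,
              sig X (w.take k) • Finsupp.single (w.drop k) (1 : ℝ))⟩ :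
            RawPath (Fin t))).toFun s j :=
  statement13_general B X Y hX hY

end PathVarieties
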